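/- For σ ∈ {-1,1}^N with N ≥ k, the Hamiltonians H_N(σ) = -(1/N^{k-1}) ∑_{i_1,…,i_k=1}^N σ_{i_1}⋯σ_{i_k} and H̃_N(σ) = -(N/(N(N-1)⋯(N-k+1))) ∑_{i_1,…,i_k pairwise distinct} σ_{i_1}⋯σ_{i_k} differ by a quantity bounded uniformly in N and σ: there exists C_k such that |H_N(σ) − H̃_N(σ)| ≤ C_k for all N ≥ k and all σ. -/
import Mathlib


open Finset

noncomputable def spin (b : Bool) : ℝ := if b then 1 else -1

/-- Full k-spin Hamiltonian `H_N = -(1/N^{k-1}) ∑_{i_1,…,i_k} σ_{i_1}⋯σ_{i_k}`. -/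
noncomputable def hamFull (k N : ℕ) (σ : Fin N → Bool) : ℝ :=
  -(1 / (N : ℝ) ^ (k - 1)) * ∑ i : Fin k → Fin N, ∏ j, spin (σ (i j))

/-- Symmetrized k-spin Hamiltonian over pairwise distinct indices, normalized by
`(N-1)(N-2)⋯(N-k+1)`. -/
noncomputable def hamTilde (k N : ℕ) (σ : Fin N → Bool) : ℝ :=
  -(1 / ((N - 1).descFactorial (k - 1) : ℝ)) *
    ∑ i ∈ Finset.univ.filter (fun i : Fin k → Fin N => Function.Injective i),
      ∏ j, spin (σ (i j))

lemma key_ineq (m n : ℕ) (h : m ≤ n) :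
    2 * (n+1)^(m+1) ≤ 2*(n+1)*(n.descFactorial m) + (n+1)^m * (m*(m+1)) := by
  induction m with
  | zero => simp
  | succ m ih =>
    have hm : m ≤ n := by omega
    have H := ih hm
    obtain ⟨t, rfl⟩ : ∃ t, n = t + m := ⟨n - m, by omega⟩
    rw [Nat.descFactorial_succ]
    have hd : (t+m).descFactorial m ≤ (t+m+1)^m :=
      le_trans (Nat.descFactorial_le_pow _ _) (Nat.pow_le_pow_left (Nat.le_succ _) m)
    have ht : t + m - m = t := by omega
    rw [ht, pow_succ, pow_succ] at *
    nlinarith [Nat.mul_le_mul_left (2*(t+m+1)*(m+1)) hd, Nat.mul_le_mul_left (t+m+1) H]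

lemma abs_spin (b : Bool) : |spin b| = 1 := by cases b <;> simp [spin]

/-- `H_N` and `H̃_N` differ by a quantity bounded uniformly in `N ≥ k` and `σ`. -/
theorem ham_tilde_close (k : ℕ) (hk : 1 ≤ k) :
    ∃ C : ℝ, ∀ (N : ℕ), k ≤ N → ∀ σ : Fin N → Bool,
      |hamFull k N σ - hamTilde k N σ| ≤ C := by
  refine ⟨((k-1)*k : ℕ), fun N hN σ => ?_⟩
  have hN1 : 1 ≤ N := le_trans hk hN
  classical
  set S : ℝ := ∑ i : Fin k → Fin N, ∏ j, spin (σ (i j)) with hS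
  set S' : ℝ := ∑ i ∈ Finset.univ.filter (fun i : Fin k → Fin N => Function.Injective i),
      ∏ j, spin (σ (i j)) with hS'
  set D : ℝ := ((N - 1).descFactorial (k - 1) : ℝ) with hD
  set P : ℝ := (N : ℝ) ^ (k - 1) with hP
  -- positivity
  have hdpos : 0 < (N - 1).descFactorial (k - 1) :=
    Nat.pos_of_ne_zero (fun h => by
      have := Nat.descFactorial_eq_zero_iff_lt.mp h; omega)
  have hDpos : (0:ℝ) < D := by rw [hD]; exact_mod_cast hdpos
  have hPpos : (0:ℝ) < P := by positivity
  have hDP : D ≤ P := by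
    have h1 : (N - 1).descFactorial (k - 1) ≤ (N-1)^(k-1) := Nat.descFactorial_le_pow _ _
    have h2 : (N-1)^(k-1) ≤ N^(k-1) := Nat.pow_le_pow_left (by omega) _
    rw [hD, hP]
    exact_mod_cast le_trans h1 h2
  -- cardinality of injective tuples
  have hcard : (Finset.univ.filter (fun i : Fin k → Fin N => Function.Injective i)).card
      = N * (N - 1).descFactorial (k - 1) := by
    have h1 : (Finset.univ.filter (fun i : Fin k → Fin N => Function.Injective i)).card
        = Fintype.card {f : Fin k → Fin N // Function.Injective f} :=
      (Fintype.card_subtype _).symm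
    rw [h1, Fintype.card_congr (Equiv.subtypeInjectiveEquivEmbedding (Fin k) (Fin N)),
      Fintype.card_embedding_eq]
    simp only [Fintype.card_fin]
    obtain ⟨n, rfl⟩ : ∃ n, N = n + 1 := ⟨N - 1, by omega⟩
    obtain ⟨m, rfl⟩ : ∃ m, k = m + 1 := ⟨k - 1, by omega⟩
    simp only [Nat.add_sub_cancel]
    exact Nat.succ_descFactorial_succ n m
  -- |S'| ≤ N * D
  have habs : ∀ i : Fin k → Fin N, |∏ j, spin (σ (i j))| = 1 := by
    intro i
    rw [Finset.abs_prod]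
    simp [abs_spin]
  have hS'bd : |S'| ≤ (N:ℝ) * D := by
    calc |S'| ≤ ∑ i ∈ Finset.univ.filter (fun i : Fin k → Fin N => Function.Injective i),
        |∏ j, spin (σ (i j))| := Finset.abs_sum_le_sum_abs _ _
      _ = (Finset.univ.filter (fun i : Fin k → Fin N => Function.Injective i)).card := by
        simp [habs]
      _ = (N:ℝ) * D := by rw [hcard]; push_cast; ring
  -- |S - S'| ≤ N^k - N*D
  have hsplit : S - S' = ∑ i ∈ Finset.univ.filter
      (fun i : Fin k → Fin N => ¬ Function.Injective i), ∏ j, spin (σ (i j)) := by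
    rw [hS, hS', ← Finset.sum_filter_add_sum_filter_not Finset.univ
      (fun i : Fin k → Fin N => Function.Injective i)]
    ring
  have hcard2 : (Finset.univ.filter (fun i : Fin k → Fin N => ¬ Function.Injective i)).card
      + N * (N - 1).descFactorial (k - 1) = N ^ k := by
    rw [← hcard]
    rw [add_comm, Finset.card_filter_add_card_filter_not]
    simp [Finset.card_univ, Fintype.card_fun]
  have hNDle : (N:ℝ) * D ≤ (N:ℝ)^k := by
    have : N * (N - 1).descFactorial (k - 1) ≤ N ^ k := by omega
    rw [hD]; exact_mod_cast this
  have hSdbd : |S - S'| ≤ (N:ℝ)^k - (N:ℝ) * D := by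
    rw [hsplit]
    calc |∑ i ∈ Finset.univ.filter (fun i : Fin k → Fin N => ¬ Function.Injective i),
        ∏ j, spin (σ (i j))|
        ≤ ∑ i ∈ Finset.univ.filter (fun i : Fin k → Fin N => ¬ Function.Injective i),
          |∏ j, spin (σ (i j))| := Finset.abs_sum_le_sum_abs _ _
      _ = ((Finset.univ.filter (fun i : Fin k → Fin N => ¬ Function.Injective i)).card : ℝ) := by
          simp [habs]
      _ = (N:ℝ)^k - (N:ℝ) * D := by
          have hc2R : ((Finset.univ.filter
              (fun i : Fin k → Fin N => ¬ Function.Injective i)).card : ℝ) + (N:ℝ) * D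
              = (N:ℝ)^k := by
            rw [hD]
            exact_mod_cast hcard2
          linarith
  -- algebraic split of the difference
  have hNP : (N:ℝ)^k = (N:ℝ) * P := by
    rw [hP, ← pow_succ']
    congr 1
    omega
  have hdiff : hamFull k N σ - hamTilde k N σ = (1/D - 1/P) * S' - (1/P) * (S - S') := by
    rw [hamFull, hamTilde, ← hS, ← hS', ← hD, ← hP]
    ring
  -- key inequality, cast to ℝ
  have hkey : 2 * ((N:ℝ)^k) ≤ 2 * ((N:ℝ) * D) + P * (((k-1)*k : ℕ) : ℝ) := by
    have h := key_ineq (k-1) (N-1) (by omega)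
    have e1 : N - 1 + 1 = N := by omega
    have e2 : k - 1 + 1 = k := by omega
    rw [e1, e2] at h
    rw [hD, hP]
    have hR := (Nat.cast_le (α := ℝ)).mpr h
    push_cast at hR
    push_cast
    linarith
  -- finish
  rw [hdiff]
  calc |(1/D - 1/P) * S' - (1/P) * (S - S')|
      ≤ |(1/D - 1/P) * S'| + |(1/P) * (S - S')| := abs_sub _ _
    _ = (1/D - 1/P) * |S'| + (1/P) * |S - S'| := by
        have h1 : 1/P ≤ 1/D := one_div_le_one_div_of_le hDpos hDP
        rw [abs_mul, abs_mul, abs_of_nonneg (by positivity : (0:ℝ) ≤ 1/P),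
          abs_of_nonneg (by linarith : (0:ℝ) ≤ 1/D - 1/P)]
    _ ≤ (1/D - 1/P) * ((N:ℝ) * D) + (1/P) * ((N:ℝ)^k - (N:ℝ) * D) := by
        have h1 : 1/P ≤ 1/D := one_div_le_one_div_of_le hDpos hDP
        have h2 : (0:ℝ) ≤ 1/D - 1/P := by linarith
        gcongr
    _ = (2 * ((N:ℝ)^k) - 2 * ((N:ℝ) * D)) / P := by
        rw [hNP]
        field_simp
        ring
    _ ≤ (((k-1)*k : ℕ) : ℝ) := by
        rw [hNP, div_le_iff₀ hPpos]
        rw [hNP] at hkey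
        linarith
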